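/- The ring Mat₃(R) over a commutative ring R is generated as an R-algebra by E₁₂, E₂₃, E₃₁ subject only to the relations E₁₂² = E₂₃² = E₃₁² = E₁₂E₃₁ = E₂₃E₁₂ = E₃₁E₂₃ = 0 and E₁₂E₂₃E₃₁ + E₂₃E₃₁E₁₂ + E₃₁E₁₂E₂₃ = 1. -/

import Mathlib

/-!
If `a, b, c` in a ring satisfy the relations, multiplying `abc + bca + cab = 1` on the left by a
generator gives `abca = a`, `bcab = b`, `cabc = c`. Hence the nine products of generators along the
cycle `1 → 2 → 3 → 1`, namely `abc, a, ab; bc, bca, b; c, ca, cab` in place of `E₁₁, …, E₃₃`,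
form a complete system of `3 × 3` matrix units. They define an algebra map
`Mat₃(R) → RingQuot (mat3Rel R)` inverse to the evaluation of the generators at `E₁₂, E₂₃, E₃₁`.
-/

/-- The relations `E₁₂² = E₂₃² = E₃₁² = E₁₂E₃₁ = E₂₃E₁₂ = E₃₁E₂₃ = 0` and
`E₁₂E₂₃E₃₁ + E₂₃E₃₁E₁₂ + E₃₁E₁₂E₂₃ = 1` on the free algebra on three generators
`E₁₂ = ι 0`, `E₂₃ = ι 1`, `E₃₁ = ι 2` over a commutative ring `R`. -/
def mat3Rel (R : Type*) [CommRing R] :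
    FreeAlgebra R (Fin 3) → FreeAlgebra R (Fin 3) → Prop := fun u v =>
  letI e12 := FreeAlgebra.ι R (0 : Fin 3)
  letI e23 := FreeAlgebra.ι R (1 : Fin 3)
  letI e31 := FreeAlgebra.ι R (2 : Fin 3)
  v = 0 ∧ (
    u = e12 * e12 ∨ u = e23 * e23 ∨ u = e31 * e31 ∨
    u = e12 * e31 ∨ u = e23 * e12 ∨ u = e31 * e23 ∨
    u = e12 * e23 * e31 + e23 * e31 * e12 + e31 * e12 * e23 - 1)

open Matrix

namespace Matrix

variable {n R S : Type*} [Fintype n] [DecidableEq n] [CommSemiring R] [Semiring S] [Algebra R S]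

noncomputable def liftMatrixUnits (e : n → n → S)
    (he_mul : ∀ i j k l, e i j * e k l = if j = k then e i l else 0) (he_one : ∑ i, e i i = 1) :
    Matrix n n R →ₐ[R] S :=
  .ofLinearMap (liftLinear R fun i j => LinearMap.toSpanSingleton R S (e i j))
    (by
      rw [← sum_single_one, map_sum]
      simpa using he_one)
    (by
      intro M N
      induction M using Matrix.induction_on' with
      | h_zero => simp
      | h_add p q hp hq => simp only [add_mul, map_add, hp, hq]
      | h_std_basis i j c =>
        induction N using Matrix.induction_on' with
        | h_zero => simp
        | h_add p q hp hq => simp only [mul_add, map_add, hp, hq]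
        | h_std_basis k l d =>
          simp only [liftLinear_single, LinearMap.toSpanSingleton_apply, smul_mul_smul, he_mul]
          split_ifs with hjk
          · subst hjk; simp
          · rw [single_mul_single_of_ne (h := hjk), map_zero, smul_zero])

@[simp]
theorem liftMatrixUnits_single (e : n → n → S) (he_mul) (he_one) (i j : n) (c : R) :
    liftMatrixUnits e he_mul he_one (single i j c) = c • e i j :=
  liftLinear_single R _ i j c

end Matrix

/-- The relations of `mat3Rel`, with `a, b, c` in place of `E₁₂, E₂₃, E₃₁`. -/
structure IsMat3Triple {S : Type*} [Semiring S] (a b c : S) : Prop where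
  a_mul_a : a * a = 0
  b_mul_b : b * b = 0
  c_mul_c : c * c = 0
  a_mul_c : a * c = 0
  b_mul_a : b * a = 0
  c_mul_b : c * b = 0
  sum_cyclic_eq_one : a * b * c + b * c * a + c * a * b = 1

/-- The products of `a, b, c` along the cycle `0 → 1 → 2 → 0` from `i` to `j` (once around for
`i = j`); for `a, b, c = E₁₂, E₂₃, E₃₁` this is `E_ij`. -/
def mat3Units {S : Type*} [Mul S] (a b c : S) : Fin 3 → Fin 3 → S :=
  ![![a * b * c, a, a * b],
    ![b * c, b * c * a, b],
    ![c, c * a, c * a * b]]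

namespace IsMat3Triple

variable {S : Type*} [Semiring S] {a b c : S} (h : IsMat3Triple a b c)
include h

theorem a_mul_b_mul_c_mul_a : a * (b * (c * a)) = a := by
  have := congrArg (a * ·) h.sum_cyclic_eq_one
  simpa [mul_add, ← mul_assoc, h.a_mul_a, h.a_mul_c] using this

theorem b_mul_c_mul_a_mul_b : b * (c * (a * b)) = b := by
  have := congrArg (b * ·) h.sum_cyclic_eq_one
  simpa [mul_add, ← mul_assoc, h.b_mul_b, h.b_mul_a] using this

theorem c_mul_a_mul_b_mul_c : c * (a * (b * c)) = c := by
  have := congrArg (c * ·) h.sum_cyclic_eq_one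
  simpa [mul_add, ← mul_assoc, h.c_mul_c, h.c_mul_b] using this

theorem mat3Units_mul (i j k l : Fin 3) :
    mat3Units a b c i j * mat3Units a b c k l = if j = k then mat3Units a b c i l else 0 := by
  have tail {x y : S} (hxy : x * y = 0) (t : S) : x * (y * t) = 0 := by
    rw [← mul_assoc, hxy, zero_mul]
  fin_cases i <;> fin_cases j <;> fin_cases k <;> fin_cases l <;>
    simp [mat3Units, mul_assoc, h.a_mul_a, h.b_mul_b, h.c_mul_c, h.a_mul_c, h.b_mul_a, h.c_mul_b,
      tail h.a_mul_a, tail h.b_mul_b, tail h.c_mul_c, tail h.a_mul_c, tail h.b_mul_a, tail h.c_mul_b,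
      h.a_mul_b_mul_c_mul_a, h.b_mul_c_mul_a_mul_b, h.c_mul_a_mul_b_mul_c]

theorem sum_mat3Units_diag : ∑ i, mat3Units a b c i i = 1 := by
  simpa [Fin.sum_univ_three, mat3Units] using h.sum_cyclic_eq_one

end IsMat3Triple

namespace IsMat3Triple

variable {R S : Type*} [CommRing R] [Ring S] [Algebra R S] {a b c : S}

noncomputable def liftMat3Rel (h : IsMat3Triple a b c) : RingQuot (mat3Rel R) →ₐ[R] S :=
  RingQuot.liftAlgHom R ⟨FreeAlgebra.lift R ![a, b, c], by
    rintro u v ⟨rfl, rfl | rfl | rfl | rfl | rfl | rfl | rfl⟩ <;>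
      simp [h.a_mul_a, h.b_mul_b, h.c_mul_c, h.a_mul_c, h.b_mul_a, h.c_mul_b, h.sum_cyclic_eq_one]⟩

@[simp]
theorem liftMat3Rel_mkAlgHom_ι (h : IsMat3Triple a b c) (i : Fin 3) :
    h.liftMat3Rel (RingQuot.mkAlgHom R (mat3Rel R) (FreeAlgebra.ι R i)) = ![a, b, c] i := by
  simp [liftMat3Rel, RingQuot.liftAlgHom_mkAlgHom_apply]

end IsMat3Triple

theorem isMat3Triple_mkAlgHom_ι (R : Type*) [CommRing R] : IsMat3Triple
    (RingQuot.mkAlgHom R (mat3Rel R) (FreeAlgebra.ι R 0))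
    (RingQuot.mkAlgHom R (mat3Rel R) (FreeAlgebra.ι R 1))
    (RingQuot.mkAlgHom R (mat3Rel R) (FreeAlgebra.ι R 2)) := by
  have rel {u : FreeAlgebra R (Fin 3)} (hu : mat3Rel R u 0) : RingQuot.mkAlgHom R (mat3Rel R) u = 0 := by
    rw [RingQuot.mkAlgHom_rel R hu, map_zero]
  refine ⟨?_, ?_, ?_, ?_, ?_, ?_, sub_eq_zero.mp ?_⟩ <;>
    simp only [← map_mul, ← map_add, ← map_one (RingQuot.mkAlgHom R (mat3Rel R)), ← map_sub] <;>
    exact rel ⟨rfl, by simp⟩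

theorem map_mat3Units {S T F : Type*} [Mul S] [Mul T] [FunLike F S T] [MulHomClass F S T] (f : F)
    (a b c : S) (i j : Fin 3) :
    f (mat3Units a b c i j) = mat3Units (f a) (f b) (f c) i j := by
  fin_cases i <;> fin_cases j <;> simp [mat3Units]

section

variable {R : Type*} [CommRing R]

theorem mat3Units_single (i j : Fin 3) :
    mat3Units (single 0 1 (1 : R)) (single 1 2 1) (single 2 0 1) i j = single i j 1 := by
  fin_cases i <;> fin_cases j <;> simp [mat3Units]

theorem isMat3Triple_single :
    IsMat3Triple (S := Matrix (Fin 3) (Fin 3) R) (single 0 1 1) (single 1 2 1) (single 2 0 1) where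
  a_mul_a := by simp
  b_mul_b := by simp
  c_mul_c := by simp
  a_mul_c := by simp
  b_mul_a := by simp
  c_mul_b := by simp
  sum_cyclic_eq_one := by
    rw [← sum_single_one, Fin.sum_univ_three]
    simp

end

/-- `Mat₃(R)` is generated as an `R`-algebra by the matrix units `E₁₂`, `E₂₃`, `E₃₁`
subject only to the relations `E₁₂² = E₂₃² = E₃₁² = E₁₂E₃₁ = E₂₃E₁₂ = E₃₁E₂₃ = 0` and
`E₁₂E₂₃E₃₁ + E₂₃E₃₁E₁₂ + E₃₁E₁₂E₂₃ = 1`: the natural map from the presented algebra to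
`Mat₃(R)` is an isomorphism. -/
theorem mat3_presentation (R : Type*) [CommRing R] :
    ∃ θ : RingQuot (mat3Rel R) ≃ₐ[R] Matrix (Fin 3) (Fin 3) R,
      θ (RingQuot.mkAlgHom R (mat3Rel R) (FreeAlgebra.ι R 0)) =
        Matrix.single 0 1 1 ∧
      θ (RingQuot.mkAlgHom R (mat3Rel R) (FreeAlgebra.ι R 1)) =
        Matrix.single 1 2 1 ∧
      θ (RingQuot.mkAlgHom R (mat3Rel R) (FreeAlgebra.ι R 2)) =
        Matrix.single 2 0 1 := by
  have hgen := isMat3Triple_mkAlgHom_ι R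
  let φ := (isMat3Triple_single (R := R)).liftMat3Rel (R := R)
  let ψ := liftMatrixUnits (R := R) _ hgen.mat3Units_mul hgen.sum_mat3Units_diag
  have φψ : φ.comp ψ = AlgHom.id R _ := by
    refine AlgHom.toLinearMap_injective (ext_linearMap R fun i j => LinearMap.ext fun c => ?_)
    simp [ψ, φ, map_mat3Units, mat3Units_single]
  have ψφ : ψ.comp φ = AlgHom.id R _ := by
    ext i
    fin_cases i <;> simp [ψ, φ, mat3Units]
  exact ⟨AlgEquiv.ofAlgHom φ ψ φψ ψφ, by simp [φ], by simp [φ], by simp [φ]⟩
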